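/- For every real ν ≥ 1/2, the function f(x) = x^{1/2} e^{-x} I_ν(x) is strictly increasing on (0,∞) and converges to 1/√(2π) as x → ∞; consequently I_ν(x) ≤ (1/√(2π)) x^{-1/2} e^{x} for all x > 0. -/

import Mathlib

/-!
Expanding `cosh` termwise and evaluating the moments `∫₀¹ t^{2k} (1 - t²)^{ν-1/2} dt` as Beta
integrals gives Poisson's representation
`I_ν(x) = 2 (x/2)^ν / (√π Γ(ν+1/2)) ∫₀¹ cosh(x t) (1 - t²)^{ν-1/2} dt`.
Writing `2 e^{-x} cosh(x t) = e^{-x(1-t)} + e^{-x(1+t)}` and substituting `u = x (1 ∓ t)` turns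
`√x e^{-x} I_ν(x)` into a positive multiple of `G(x) = ∫₀^{2x} e^{-u} u^p (2 - u/x)^p du`,
`p = ν - 1/2 ≥ 0`. Both the range of integration and, as `p ≥ 0`, the integrand of `G` grow
with `x`, and by dominated convergence `G(x) → 2^p Γ(p+1)`, which gives the limit `1/√(2π)`.
The bound on `I_ν` says that the increasing function stays below its limit.
-/

/-- The modified Bessel function of the first kind, defined for `x > 0` by the power series
`I_ν(x) = Σ_{k=0}^∞ (1/(k! Γ(ν+k+1))) (x/2)^{2k+ν}`. -/
noncomputable def besselIseries (ν x : ℝ) : ℝ :=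
  ∑' k : ℕ, (1 / ((Nat.factorial k : ℝ) * Real.Gamma (ν + k + 1))) *
    (x / 2) ^ (2 * (k : ℝ) + ν)

open Real MeasureTheory Set Filter
open scoped Nat Topology

theorem MonotoneOn.le_of_tendsto_atTop {α β : Type*} [LinearOrder α] [TopologicalSpace β]
    [Preorder β] [OrderClosedTopology β] {f : α → β} {a x : α} {L : β}
    (hf : MonotoneOn f (Ioi a)) (hlim : Tendsto f atTop (𝓝 L)) (hx : a < x) : f x ≤ L :=
  haveI : Nonempty α := ⟨x⟩
  ge_of_tendsto hlim <| (eventually_ge_atTop x).mono fun _ hy => hf hx (hx.trans_le hy) hy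

theorem sqrt_mul_exp_neg_mul_rpow_neg_half_mul_exp {x : ℝ} (hx : 0 < x) :
    √x * exp (-x) * (x ^ (-(1:ℝ)/2) * exp x) = 1 := by
  rw [mul_mul_mul_comm, sqrt_eq_rpow, ← rpow_add hx, ← exp_add]
  norm_num

theorem two_sub_div_nonneg {x u : ℝ} (hx : 0 < x) (hu : u ≤ 2 * x) : 0 ≤ 2 - u / x := by
  rw [sub_nonneg, div_le_iff₀ hx]; linarith

theorem Gamma_nat_add_half_mul (k : ℕ) :
    Gamma (k + 1/2) * (k ! * 4 ^ k) = (2 * k)! * √π := by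
  have h := Real.Gamma_mul_Gamma_add_half (k + 1/2)
  rw [show (k:ℝ) + 1/2 + 1/2 = k + 1 by ring,
    show 2 * ((k:ℝ) + 1/2) = (2 * k : ℕ) + 1 by push_cast; ring, Gamma_nat_eq_factorial,
    Gamma_nat_eq_factorial, sub_add_cancel_right, rpow_neg zero_le_two, rpow_natCast, pow_mul] at h
  rw [← mul_assoc, h]
  field_simp
  norm_num

theorem integral_rpow_mul_one_sub_rpow {a b : ℝ} (ha : 0 < a) (hb : 0 < b) :
    ∫ u in (0:ℝ)..1, u ^ (a - 1) * (1 - u) ^ (b - 1) = Gamma a * Gamma b / Gamma (a + b) := by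
  have h := Complex.betaIntegral_eq_Gamma_mul_div a b (by simpa) (by simpa)
  rw [← Complex.ofReal_add, Complex.Gamma_ofReal, Complex.Gamma_ofReal, Complex.Gamma_ofReal,
    Complex.betaIntegral] at h
  have hint : ∫ u in (0:ℝ)..1, (u : ℂ) ^ ((a : ℂ) - 1) * (1 - (u : ℂ)) ^ ((b : ℂ) - 1) =
      ((∫ u in (0:ℝ)..1, u ^ (a - 1) * (1 - u) ^ (b - 1) : ℝ) : ℂ) := by
    rw [← intervalIntegral.integral_ofReal]
    refine intervalIntegral.integral_congr fun u hu => ?_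
    rw [uIcc_of_le zero_le_one] at hu
    rw [Complex.ofReal_mul, Complex.ofReal_cpow hu.1, Complex.ofReal_cpow (sub_nonneg.2 hu.2)]
    push_cast
    rfl
  exact_mod_cast hint ▸ h

theorem integral_pow_mul_one_sub_sq_rpow {p : ℝ} (hp : -1 < p) (k : ℕ) :
    ∫ t in (0:ℝ)..1, t ^ (2 * k) * (1 - t ^ 2) ^ p =
      Gamma (k + 1/2) * Gamma (p + 1) / (2 * Gamma (k + 1/2 + (p + 1))) := by
  have hsub := intervalIntegral.integral_comp_mul_deriv_of_deriv_nonneg (a := 0) (b := 1)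
    (f := fun t : ℝ => t ^ 2) (f' := fun t => 2 * t)
    (g := fun u => u ^ ((k + 1/2 : ℝ) - 1) * (1 - u) ^ ((p + 1) - 1))
    (by fun_prop) (fun t _ => by simpa using hasDerivAt_pow 2 t)
    (fun t ht => by rw [min_eq_left zero_le_one] at ht; linarith [ht.1])
  rw [zero_pow two_ne_zero, one_pow,
    integral_rpow_mul_one_sub_rpow (by positivity) (by linarith)] at hsub
  rw [mul_comm (2:ℝ), ← div_div, ← hsub, ← intervalIntegral.integral_div]
  refine intervalIntegral.integral_congr_ae (ae_of_all _ fun t ht => ?_)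
  rw [uIoc_of_le zero_le_one] at ht
  have h : (t ^ 2) ^ ((k:ℝ) - 1/2) * t = t ^ (2 * k) := by
    rw [← rpow_natCast t 2, ← rpow_mul ht.1.le, ← rpow_add_one ht.1.ne', ← rpow_natCast]
    push_cast; ring_nf
  simp only [Function.comp]
  rw [← h]
  ring_nf

theorem hasSum_integral_cosh_mul_one_sub_sq_rpow {p : ℝ} (hp : 0 ≤ p) (x : ℝ) :
    HasSum
      (fun k : ℕ => x ^ (2 * k) / (2 * k)! * ∫ t in (0:ℝ)..1, t ^ (2 * k) * (1 - t ^ 2) ^ p)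
      (∫ t in (0:ℝ)..1, cosh (x * t) * (1 - t ^ 2) ^ p) := by
  have hcont : Continuous fun t : ℝ => (1 - t ^ 2) ^ p := by
    fun_prop (disch := exact Or.inr hp)
  simp_rw [← intervalIntegral.integral_const_mul]
  refine intervalIntegral.hasSum_integral_of_dominated_convergence
    (fun k _ => x ^ (2 * k) / (2 * k)!) (fun k => ?_) (fun k => ae_of_all _ fun t ht => ?_)
    (ae_of_all _ fun t _ => (hasSum_cosh x).summable) intervalIntegrable_const
    (ae_of_all _ fun t _ => ?_)
  · exact (continuous_const.mul ((continuous_pow _).mul hcont)).aestronglyMeasurable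
  · rw [uIoc_of_le zero_le_one] at ht
    have h1 : 0 ≤ 1 - t ^ 2 := by nlinarith [ht.1, ht.2]
    have h2 : (1 - t ^ 2) ^ p ≤ 1 := rpow_le_one h1 (by nlinarith [ht.1]) hp
    have h3 : t ^ (2 * k) ≤ 1 := pow_le_one₀ ht.1.le ht.2
    have hx : 0 ≤ x ^ (2 * k) := (even_two_mul k).pow_nonneg x
    rw [Real.norm_eq_abs, abs_of_nonneg (mul_nonneg (div_nonneg hx (by positivity))
      (mul_nonneg (pow_nonneg ht.1.le _) (rpow_nonneg h1 p)))]
    calc x ^ (2 * k) / (2 * k)! * (t ^ (2 * k) * (1 - t ^ 2) ^ p)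
        ≤ x ^ (2 * k) / (2 * k)! * (1 * 1) := by gcongr
      _ = _ := by ring
  · simpa [mul_pow, div_mul_eq_mul_div, mul_assoc, mul_div_assoc] using
      (hasSum_cosh (x * t)).mul_right ((1 - t ^ 2) ^ p)

theorem besselIseries_eq_rpow_mul_tsum (ν : ℝ) {x : ℝ} (hx : 0 < x) :
    besselIseries ν x =
      (x / 2) ^ ν * ∑' k : ℕ, (x / 2) ^ (2 * k) / (k ! * Gamma (ν + k + 1)) := by
  rw [besselIseries, ← tsum_mul_left]
  refine tsum_congr fun k => ?_
  rw [rpow_add (by positivity), show 2 * (k:ℝ) = (2 * k : ℕ) by push_cast; ring, rpow_natCast]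
  ring

theorem hasSum_besselIseries_terms {ν : ℝ} (hν : 1/2 ≤ ν) (x : ℝ) :
    HasSum (fun k : ℕ => (x / 2) ^ (2 * k) / (k ! * Gamma (ν + k + 1)))
      (2 / (√π * Gamma (ν + 1/2)) *
        ∫ t in (0:ℝ)..1, cosh (x * t) * (1 - t ^ 2) ^ (ν - 1/2)) := by
  have hΓ := Gamma_pos_of_pos (by linarith : 0 < ν + 1/2)
  have hterm (k : ℕ) :
      x ^ (2 * k) / (2 * k)! * ∫ t in (0:ℝ)..1, t ^ (2 * k) * (1 - t ^ 2) ^ (ν - 1/2) =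
        √π * Gamma (ν + 1/2) / 2 * ((x / 2) ^ (2 * k) / (k ! * Gamma (ν + k + 1))) := by
    have hG : 0 < Gamma (ν + k + 1) := Gamma_pos_of_pos (by positivity)
    have hGk : 0 < Gamma (k + 1/2) := Gamma_pos_of_pos (by positivity)
    rw [integral_pow_mul_one_sub_sq_rpow (by linarith), ← div_eq_of_eq_mul (by positivity)
      (Gamma_nat_add_half_mul k).symm, div_pow, pow_mul (2:ℝ),
      show (k:ℝ) + 1/2 + (ν - 1/2 + 1) = ν + k + 1 by ring, show ν - 1/2 + 1 = ν + 1/2 by ring]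
    field_simp
    ring
  have hcancel (k : ℕ) : 2 / (√π * Gamma (ν + 1/2)) * (√π * Gamma (ν + 1/2) / 2 *
      ((x / 2) ^ (2 * k) / (k ! * Gamma (ν + k + 1)))) =
        (x / 2) ^ (2 * k) / (k ! * Gamma (ν + k + 1)) := by
    field_simp
  have h := (hasSum_integral_cosh_mul_one_sub_sq_rpow (by linarith : 0 ≤ ν - 1/2) x).mul_left
    (2 / (√π * Gamma (ν + 1/2)))
  simpa only [hterm, hcancel] using h

theorem integral_exp_neg_mul_rpow_eq_two_mul_exp_neg_mul_integral_cosh {p : ℝ} (hp : 0 ≤ p)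
    (x : ℝ) :
    ∫ s in (0:ℝ)..2, exp (-(x * s)) * (s * (2 - s)) ^ p =
      2 * exp (-x) * ∫ t in (0:ℝ)..1, cosh (x * t) * (1 - t ^ 2) ^ p := by
  set f : ℝ → ℝ := fun s => exp (-(x * s)) * (s * (2 - s)) ^ p
  have hf : Continuous f := by fun_prop (disch := exact Or.inr hp)
  have hsplit := intervalIntegral.integral_add_adjacent_intervals
    (hf.intervalIntegrable (μ := volume) 0 1) (hf.intervalIntegrable 1 2)
  have hleft := intervalIntegral.integral_comp_sub_left f 1 (a := 0) (b := 1)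
  have hright := intervalIntegral.integral_comp_add_left f 1 (a := 0) (b := 1)
  rw [sub_self, sub_zero] at hleft
  rw [add_zero, one_add_one_eq_two] at hright
  rw [← hsplit, ← hleft, ← hright, ← intervalIntegral.integral_add
    ((by fun_prop : Continuous fun t => f (1 - t)).intervalIntegrable 0 1)
    ((by fun_prop : Continuous fun t => f (1 + t)).intervalIntegrable 0 1),
    ← intervalIntegral.integral_const_mul]
  refine intervalIntegral.integral_congr fun t _ => ?_
  simp only [f, cosh_eq]
  rw [show (1 - t) * (2 - (1 - t)) = 1 - t ^ 2 by ring,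
    show (1 + t) * (2 - (1 + t)) = 1 - t ^ 2 by ring, show -(x * (1 - t)) = -x + x * t by ring,
    show -(x * (1 + t)) = -x + -(x * t) by ring, exp_add, exp_add]
  ring

noncomputable def deformedGamma (p x : ℝ) : ℝ :=
  ∫ u in (0:ℝ)..2 * x, exp (-u) * u ^ p * (2 - u / x) ^ p

theorem rpow_mul_integral_exp_neg_mul_eq_deformedGamma (p : ℝ) {x : ℝ} (hx : 0 < x) :
    x ^ (p + 1) * ∫ s in (0:ℝ)..2, exp (-(x * s)) * (s * (2 - s)) ^ p = deformedGamma p x := by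
  have h := intervalIntegral.integral_comp_div (fun s => exp (-(x * s)) * (s * (2 - s)) ^ p)
    hx.ne' (a := 0) (b := 2 * x)
  rw [zero_div, mul_div_cancel_right₀ _ hx.ne', smul_eq_mul] at h
  rw [rpow_add_one hx.ne', mul_assoc, ← h, ← intervalIntegral.integral_const_mul, deformedGamma]
  refine intervalIntegral.integral_congr fun u hu => ?_
  rw [uIcc_of_le (by linarith)] at hu
  rw [mul_div_cancel₀ _ hx.ne', mul_rpow (div_nonneg hu.1 hx.le) (two_sub_div_nonneg hx hu.2),
    div_rpow hu.1 hx.le]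
  field_simp

theorem continuous_deformedGamma_integrand {p : ℝ} (hp : 0 ≤ p) (x : ℝ) :
    Continuous fun u : ℝ => exp (-u) * u ^ p * (2 - u / x) ^ p := by
  fun_prop (disch := exact Or.inr hp)

theorem deformedGamma_strictMonoOn {p : ℝ} (hp : 0 ≤ p) :
    StrictMonoOn (deformedGamma p) (Ioi 0) := by
  intro x (hx : 0 < x) y (hy : 0 < y) hxy
  have hint (a b : ℝ) :=
    (continuous_deformedGamma_integrand hp y).intervalIntegrable (μ := volume) a b
  have hle : deformedGamma p x ≤ ∫ u in (0:ℝ)..2 * x, exp (-u) * u ^ p * (2 - u / y) ^ p := by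
    refine intervalIntegral.integral_mono_on (by linarith)
      ((continuous_deformedGamma_integrand hp x).intervalIntegrable _ _) (hint _ _) fun u hu => ?_
    have : u / y ≤ u / x := div_le_div_of_nonneg_left hu.1 hx hxy.le
    exact mul_le_mul_of_nonneg_left (rpow_le_rpow (two_sub_div_nonneg hx hu.2) (by linarith) hp)
      (mul_nonneg (exp_pos _).le (rpow_nonneg hu.1 p))
  have hpos : 0 < ∫ u in 2 * x..2 * y, exp (-u) * u ^ p * (2 - u / y) ^ p := by
    refine intervalIntegral.intervalIntegral_pos_of_pos_on (hint _ _) (fun u hu => ?_)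
      (by linarith)
    have h2 : 0 < 2 - u / y := by rw [sub_pos, div_lt_iff₀ hy]; linarith [hu.2]
    have := rpow_pos_of_pos (by linarith [hu.1] : 0 < u) p
    positivity
  have hsplit : deformedGamma p y = _ + _ :=
    (intervalIntegral.integral_add_adjacent_intervals (hint 0 (2 * x)) (hint (2 * x) (2 * y))).symm
  linarith

-- Past `u = 2x` the factor `(2 - u/x)^p` takes junk values; the indicator cuts them off, so that
-- all `G(x)` become integrals over the same set.
theorem deformedGamma_eq_integral_indicator (p : ℝ) {x : ℝ} (hx : 0 < x) :
    deformedGamma p x =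
      ∫ u in Ioi 0, (Ioc 0 (2 * x)).indicator (fun u => exp (-u) * u ^ p * (2 - u / x) ^ p) u := by
  rw [setIntegral_indicator measurableSet_Ioc, inter_eq_right.2 Ioc_subset_Ioi_self,
    deformedGamma, intervalIntegral.integral_of_le (by linarith)]

theorem tendsto_deformedGamma {p : ℝ} (hp : 0 ≤ p) :
    Tendsto (deformedGamma p) atTop (𝓝 (2 ^ p * Gamma (p + 1))) := by
  set F : ℝ → ℝ → ℝ := fun x =>
    (Ioc 0 (2 * x)).indicator fun u => exp (-u) * u ^ p * (2 - u / x) ^ p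
  have hΓ : 2 ^ p * Gamma (p + 1) = ∫ u in Ioi 0, 2 ^ p * (exp (-u) * u ^ p) := by
    rw [Gamma_eq_integral (by linarith), add_sub_cancel_right, integral_const_mul]
  have hint : IntegrableOn (fun u => 2 ^ p * (exp (-u) * u ^ p)) (Ioi 0) := by
    have h := GammaIntegral_convergent (by linarith : 0 < p + 1)
    rw [add_sub_cancel_right] at h
    exact h.const_mul _
  have hmeas : ∀ᶠ x in atTop, AEStronglyMeasurable (F x) (volume.restrict (Ioi 0)) :=
    Eventually.of_forall fun x =>
      (continuous_deformedGamma_integrand hp x).aestronglyMeasurable.indicator measurableSet_Ioc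
  have hbound : ∀ᶠ x in atTop,
      ∀ᵐ u ∂volume.restrict (Ioi 0), ‖F x u‖ ≤ 2 ^ p * (exp (-u) * u ^ p) := by
    filter_upwards [eventually_gt_atTop 0] with x hx
    refine ae_restrict_of_forall_mem measurableSet_Ioi fun u (hu : 0 < u) => ?_
    by_cases hux : u ∈ Ioc 0 (2 * x)
    · have h2 := two_sub_div_nonneg hx hux.2
      have h2' : 2 - u / x ≤ 2 := by have := div_nonneg hu.le hx.le; linarith
      rw [show F x u = _ from indicator_of_mem hux _,
        norm_of_nonneg (by have := rpow_nonneg h2 p; positivity)]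
      calc exp (-u) * u ^ p * (2 - u / x) ^ p ≤ exp (-u) * u ^ p * 2 ^ p := by gcongr
        _ = 2 ^ p * (exp (-u) * u ^ p) := by ring
    · rw [show F x u = 0 from indicator_of_notMem hux _, norm_zero]
      positivity
  have hlim : ∀ᵐ u ∂volume.restrict (Ioi 0),
      Tendsto (fun x => F x u) atTop (𝓝 (2 ^ p * (exp (-u) * u ^ p))) := by
    refine ae_restrict_of_forall_mem measurableSet_Ioi fun u (hu : 0 < u) => ?_
    have h : Tendsto (fun x => exp (-u) * u ^ p * (2 - u / x) ^ p) atTop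
        (𝓝 (exp (-u) * u ^ p * (2 - 0) ^ p)) :=
      ((tendsto_const_nhds.sub (tendsto_const_nhds.div_atTop tendsto_id)).rpow_const
        (Or.inr hp)).const_mul _
    rw [sub_zero, mul_comm (exp (-u) * u ^ p)] at h
    refine h.congr' ?_
    filter_upwards [eventually_ge_atTop u] with x hx
    simp only [F, indicator_of_mem (show u ∈ Ioc 0 (2 * x) from ⟨hu, by linarith⟩)]
  rw [hΓ]
  refine (tendsto_integral_filter_of_dominated_convergence _ hmeas hbound hint hlim).congr' ?_
  filter_upwards [eventually_gt_atTop 0] with x hx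
  exact (deformedGamma_eq_integral_indicator p hx).symm

theorem two_rpow_mul_Gamma_div_eq_inv_sqrt_two_pi (ν : ℝ) (hΓ : Gamma (ν + 1/2) ≠ 0) :
    2 ^ (ν - 1/2) * Gamma (ν - 1/2 + 1) / (2 ^ ν * √π * Gamma (ν + 1/2)) = 1 / √(2 * π) := by
  rw [show ν - 1/2 + 1 = ν + 1/2 by ring, rpow_sub two_pos, sqrt_mul zero_le_two, sqrt_eq_rpow 2]
  generalize Gamma (ν + 1/2) = G at hΓ ⊢
  field_simp

theorem sqrt_mul_exp_neg_mul_besselIseries {ν x : ℝ} (hν : 1/2 ≤ ν) (hx : 0 < x) :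
    √x * exp (-x) * besselIseries ν x =
      deformedGamma (ν - 1/2) x / (2 ^ ν * √π * Gamma (ν + 1/2)) := by
  have hΓ := Gamma_pos_of_pos (by linarith : 0 < ν + 1/2)
  have hpow : x ^ (ν - 1/2 + 1) = √x * (x / 2) ^ ν * 2 ^ ν := by
    rw [sqrt_eq_rpow, div_rpow hx.le zero_le_two, mul_div_assoc',
      div_mul_cancel₀ _ (by positivity), ← rpow_add hx]
    ring_nf
  rw [besselIseries_eq_rpow_mul_tsum ν hx, (hasSum_besselIseries_terms hν x).tsum_eq,
    ← rpow_mul_integral_exp_neg_mul_eq_deformedGamma _ hx,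
    integral_exp_neg_mul_rpow_eq_two_mul_exp_neg_mul_integral_cosh (by linarith), hpow]
  field_simp

/-- For `ν ≥ 1/2`, the function `x ↦ x^{1/2} e^{-x} I_ν(x)` is strictly increasing on `(0,∞)`
and converges to `1/√(2π)` at `∞`; consequently `I_ν(x) ≤ (1/√(2π)) x^{-1/2} e^x`. -/
theorem sqrt_exp_mul_besselI_strictMono_and_bound (ν : ℝ) (hν : 1/2 ≤ ν) :
    StrictMonoOn (fun x => Real.sqrt x * Real.exp (-x) * besselIseries ν x) (Set.Ioi 0) ∧
    Filter.Tendsto (fun x => Real.sqrt x * Real.exp (-x) * besselIseries ν x)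
      Filter.atTop (nhds (1 / Real.sqrt (2 * Real.pi))) ∧
    ∀ x : ℝ, 0 < x →
      besselIseries ν x ≤ (1 / Real.sqrt (2 * Real.pi)) * x ^ (-(1:ℝ)/2) * Real.exp x := by
  have hp : 0 ≤ ν - 1/2 := by linarith
  have hΓ := Gamma_pos_of_pos (by linarith : 0 < ν + 1/2)
  have hmono : StrictMonoOn (fun x => √x * exp (-x) * besselIseries ν x) (Ioi 0) := by
    intro x hx y hy hxy
    simp only [sqrt_mul_exp_neg_mul_besselIseries hν hx, sqrt_mul_exp_neg_mul_besselIseries hν hy]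
    exact div_lt_div_of_pos_right (deformedGamma_strictMonoOn hp hx hy hxy) (by positivity)
  have hlim : Tendsto (fun x => √x * exp (-x) * besselIseries ν x) atTop (𝓝 (1 / √(2 * π))) := by
    rw [← two_rpow_mul_Gamma_div_eq_inv_sqrt_two_pi ν hΓ.ne']
    refine ((tendsto_deformedGamma hp).div_const _).congr' ?_
    filter_upwards [eventually_gt_atTop 0] with x hx
    exact (sqrt_mul_exp_neg_mul_besselIseries hν hx).symm
  refine ⟨hmono, hlim, fun x hx => ?_⟩
  calc besselIseries ν x = √x * exp (-x) * besselIseries ν x * (x ^ (-(1:ℝ)/2) * exp x) := by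
        linear_combination -besselIseries ν x * sqrt_mul_exp_neg_mul_rpow_neg_half_mul_exp hx
    _ ≤ 1 / √(2 * π) * (x ^ (-(1:ℝ)/2) * exp x) := by
        gcongr
        exact hmono.monotoneOn.le_of_tendsto_atTop hlim hx
    _ = _ := by ring
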